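/- arXiv:1606.05772 — 4 statements merged into one kernel-verified Lean document; each statement's English description precedes it below -/
import Mathlib

section
/- Let φ = (1+√5)/2 and define the sextic polynomial A(x,y,z) = (5−√5)yz⁵ + (5+√5)y⁵z − 20y³z³ + (10+10√5)x²yz³ + (10−10√5)x²y³z − 10x⁴yz. Then for all real x, y, z one has x·A(x,y,z) + y·A(y,z,x) + z·A(z,x,y) = 0. Consequently W(x,y,z) = x² + y² + z² is a first integral of the icosahedral vector field (A(x,y,z), A(y,z,x), A(z,x,y))/(x²+y²+z²)². -/
/-- The numerator of the first component of the icosahedral superflow's vector field. -/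
noncomputable def A (x y z : ℝ) : ℝ :=
  (5 - Real.sqrt 5) * y * z ^ 5 + (5 + Real.sqrt 5) * y ^ 5 * z - 20 * y ^ 3 * z ^ 3
    + (10 + 10 * Real.sqrt 5) * x ^ 2 * y * z ^ 3 + (10 - 10 * Real.sqrt 5) * x ^ 2 * y ^ 3 * z
    - 10 * x ^ 4 * y * z

lemma key (x y z : ℝ) : x * A x y z + y * A y z x + z * A z x y = 0 := by
  simp only [A]; ring

/-- `x·A(x,y,z) + y·A(y,z,x) + z·A(z,x,y) = 0`; consequently `W = x² + y² + z²` is a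
first integral of the icosahedral vector field `(A(x,y,z), A(y,z,x), A(z,x,y))/(x²+y²+z²)²`. -/
theorem stmt0 :
    (∀ x y z : ℝ, x * A x y z + y * A y z x + z * A z x y = 0) ∧
    (∀ x y z : ℝ, (x, y, z) ≠ (0, 0, 0) →
      (2 * x) * (A x y z / (x ^ 2 + y ^ 2 + z ^ 2) ^ 2)
        + (2 * y) * (A y z x / (x ^ 2 + y ^ 2 + z ^ 2) ^ 2)
        + (2 * z) * (A z x y / (x ^ 2 + y ^ 2 + z ^ 2) ^ 2) = 0) := by
  refine ⟨key, fun x y z _ => ?_⟩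
  have h := key x y z
  have : (2 * x) * (A x y z / (x ^ 2 + y ^ 2 + z ^ 2) ^ 2)
        + (2 * y) * (A y z x / (x ^ 2 + y ^ 2 + z ^ 2) ^ 2)
        + (2 * z) * (A z x y / (x ^ 2 + y ^ 2 + z ^ 2) ^ 2)
      = 2 * (x * A x y z + y * A y z x + z * A z x y) / (x ^ 2 + y ^ 2 + z ^ 2) ^ 2 := by
    ring
  rw [this, h]
  simp
end

section
/- Let φ = (1+√5)/2, A(x,y,z) = (5−√5)yz⁵ + (5+√5)y⁵z − 20y³z³ + (10+10√5)x²yz³ + (10−10√5)x²y³z − 10x⁴yz, and let A^τ(x,y,z) = (5+√5)yz⁵ + (5−√5)y⁵z − 20y³z³ + (10−10√5)x²yz³ + (10+10√5)x²y³z − 10x⁴yz be obtained from A by replacing √5 with −√5. Let Q(x,y,z) = (A(x,y,z), A(y,z,x), A(z,x,y))/(x²+y²+z²)² and Q^τ(x,y,z) = (A^τ(x,y,z), A^τ(y,z,x), A^τ(z,x,y))/(x²+y²+z²)², and let ε be the matrix swapping the first two coordinates: ε(x,y,z) = (y,x,z). Then for every v ∈ ℝ³, v ≠ 0, one has ε⁻¹(Q(εv))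 = Q^τ(v); i.e. the icosahedral superflow and its Galois conjugate are linearly conjugate via ε. -/
/-- The Galois conjugate of `A`, obtained by replacing `√5` with `−√5`. -/
noncomputable def Aτ (x y z : ℝ) : ℝ :=
  (5 + Real.sqrt 5) * y * z ^ 5 + (5 - Real.sqrt 5) * y ^ 5 * z - 20 * y ^ 3 * z ^ 3
    + (10 - 10 * Real.sqrt 5) * x ^ 2 * y * z ^ 3 + (10 + 10 * Real.sqrt 5) * x ^ 2 * y ^ 3 * z
    - 10 * x ^ 4 * y * z

/-- The icosahedral vector field. -/
noncomputable def Qf (v : Fin 3 → ℝ) : Fin 3 → ℝ := fun i =>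
  ![A (v 0) (v 1) (v 2), A (v 1) (v 2) (v 0), A (v 2) (v 0) (v 1)] i
    / ((v 0) ^ 2 + (v 1) ^ 2 + (v 2) ^ 2) ^ 2

/-- The Galois conjugate icosahedral vector field. -/
noncomputable def Qτf (v : Fin 3 → ℝ) : Fin 3 → ℝ := fun i =>
  ![Aτ (v 0) (v 1) (v 2), Aτ (v 1) (v 2) (v 0), Aτ (v 2) (v 0) (v 1)] i
    / ((v 0) ^ 2 + (v 1) ^ 2 + (v 2) ^ 2) ^ 2

/-- The matrix `ε` swapping the first two coordinates. -/
noncomputable def εmat : Matrix (Fin 3) (Fin 3) ℝ := !![0, 1, 0; 1, 0, 0; 0, 0, 1]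

lemma εinv : εmat⁻¹ = εmat := by
  have h : εmat * εmat = 1 := by
    ext i j
    fin_cases i <;> fin_cases j <;>
      simp [εmat, Matrix.mul_apply, Fin.sum_univ_succ, Matrix.one_apply]
  exact Matrix.inv_eq_left_inv h

/-- `ε⁻¹ ∘ Q ∘ ε = Q^τ`: the icosahedral superflow and its Galois conjugate are linearly
conjugate via `ε`. -/
theorem stmt5 :
    ∀ v : Fin 3 → ℝ, v ≠ 0 → (εmat⁻¹).mulVec (Qf (εmat.mulVec v)) = Qτf v := by
  intro v _
  rw [εinv]
  funext i
  have h0 : εmat.mulVec v 0 = v 1 := by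
    simp [εmat, Matrix.mulVec, dotProduct, Fin.sum_univ_succ]
  have h1 : εmat.mulVec v 1 = v 0 := by
    simp [εmat, Matrix.mulVec, dotProduct, Fin.sum_univ_succ]
  have h2 : εmat.mulVec v 2 = v 2 := by
    simp [εmat, Matrix.mulVec, dotProduct, Fin.sum_univ_succ]
  fin_cases i <;>
    simp [Matrix.mulVec, dotProduct, Fin.sum_univ_succ, εmat, Qf, Qτf, h0, h1, h2,
      A, Aτ] <;>
    ring_nf
end

section
/- Let r: I → ℝ be differentiable on an interval I and satisfy r′(t) = (2/√5)·(16r⁴ − 12r² + 1)·(1 − r²) for all t ∈ I, and suppose that 4r(t)² + 2r(t) − 1 ≠ 0 and r(t) ≠ 1 on I. Define G(t) = (4r² − 2r − 1)²(r + 1) / ((4r² + 2r − 1)²(r − 1)). Then G is differentiable and G′(t) = 4√5 · G(t) for all t ∈ I; consequently G(t) = G(t₀)·e^{4√5(t − t₀)} for any t₀, t ∈ I. -/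
/-!
With `a = 4r² − 2r − 1` and `b = 4r² + 2r − 1` one has `16r⁴ − 12r² + 1 = ab`, so the
logarithmic derivative of `G = a²(r + 1)/(b²(r − 1))` along the flow is
`(2/√5)·(2(a′b − ab′)(1 − r²) + 2ab)`, and the polynomial identity
`(a′b − ab′)(1 − r²) + ab = 5` makes it the constant `4√5`. A function with `G′ = cG` on an
interval is `G(t₀)e^{c(t − t₀)}`, since `G(t)e^{−ct}` has derivative zero there.
-/

open Real

noncomputable def superflowField (x : ℝ) : ℝ :=
  (2 / √5) * (16 * x ^ 4 - 12 * x ^ 2 + 1) * (1 - x ^ 2)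

noncomputable def superflowQuotient (x : ℝ) : ℝ :=
  (4 * x ^ 2 - 2 * x - 1) ^ 2 * (x + 1) / ((4 * x ^ 2 + 2 * x - 1) ^ 2 * (x - 1))

theorem superflow_wronskian_identity (x : ℝ) :
    ((8 * x - 2) * (4 * x ^ 2 + 2 * x - 1) - (4 * x ^ 2 - 2 * x - 1) * (8 * x + 2))
      * (1 - x ^ 2) + (4 * x ^ 2 - 2 * x - 1) * (4 * x ^ 2 + 2 * x - 1) = 5 := by
  ring

theorem HasDerivAt.superflowQuotient_comp {r : ℝ → ℝ} {t : ℝ}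
    (hr : HasDerivAt r (superflowField (r t)) t)
    (hb : 4 * r t ^ 2 + 2 * r t - 1 ≠ 0) (hr1 : r t ≠ 1) :
    HasDerivAt (fun t => superflowQuotient (r t)) (4 * √5 * superflowQuotient (r t)) t := by
  set x := r t
  have hid := hasDerivAt_id' x
  have hda : HasDerivAt (fun x => 4 * x ^ 2 - 2 * x - 1) (8 * x - 2) x := by
    refine ((((hid.fun_pow 2).const_mul 4).fun_sub (hid.const_mul 2)).sub_const 1).congr_deriv ?_
    norm_num
    ring
  have hdb : HasDerivAt (fun x => 4 * x ^ 2 + 2 * x - 1) (8 * x + 2) x := by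
    refine ((((hid.fun_pow 2).const_mul 4).fun_add (hid.const_mul 2)).sub_const 1).congr_deriv ?_
    norm_num
    ring
  have hden : (4 * x ^ 2 + 2 * x - 1) ^ 2 * (x - 1) ≠ 0 :=
    mul_ne_zero (pow_ne_zero 2 hb) (sub_ne_zero.mpr hr1)
  have hq := ((hda.fun_pow 2).fun_mul (hid.add_const 1)).fun_div
    ((hdb.fun_pow 2).fun_mul (hid.sub_const 1)) hden
  refine (hq.comp t hr).congr_deriv ?_
  have h5 : √5 ^ 2 = 5 := sq_sqrt (by norm_num)
  have hW := superflow_wronskian_identity x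
  have hab : 16 * x ^ 4 - 12 * x ^ 2 + 1 = (4 * x ^ 2 - 2 * x - 1) * (4 * x ^ 2 + 2 * x - 1) := by
    ring
  simp only [superflowQuotient, superflowField, hab, Nat.cast_ofNat, Nat.add_one_sub_one, pow_one]
  -- as atoms, `a` and `b` survive `field_simp`'s normalisation, so it can use `hb : b ≠ 0`
  generalize 4 * x ^ 2 - 2 * x - 1 = a at hW ⊢
  generalize 4 * x ^ 2 + 2 * x - 1 = b at hW hb ⊢
  field_simp
  linear_combination (-4 * a ^ 2 * (1 - x ^ 2)) * hW + (4 * a ^ 2 * (1 - x ^ 2)) * h5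

theorem Convex.eq_mul_exp_of_hasDerivAt_eq_mul {s : Set ℝ} (hs : Convex ℝ s) {f : ℝ → ℝ} {c : ℝ}
    (hf : ∀ t ∈ s, HasDerivAt f (c * f t) t) {t₀ t : ℝ} (ht₀ : t₀ ∈ s) (ht : t ∈ s) :
    f t = f t₀ * exp (c * (t - t₀)) := by
  have hconst : ∀ x ∈ s, HasDerivWithinAt (fun x => f x * exp (-c * x)) 0 s x := fun x hx =>
    ((hf x hx).mul ((hasDerivAt_id' x).const_mul (-c)).exp).hasDerivWithinAt.congr_deriv
      (by ring)
  have h := hs.norm_image_sub_le_of_norm_hasDerivWithin_le hconst (C := 0) (by simp) ht₀ ht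
  rw [zero_mul, norm_le_zero_iff, sub_eq_zero] at h
  calc f t = f t * exp (-c * t) * exp (c * t) := by rw [mul_assoc, ← exp_add]; simp
    _ = f t₀ * exp (-c * t₀) * exp (c * t) := by rw [h]
    _ = f t₀ * exp (c * (t - t₀)) := by rw [mul_assoc, ← exp_add]; ring_nf

/-- If `r′ = (2/√5)(16r⁴ − 12r² + 1)(1 − r²)` on an interval `I`, with
`4r² + 2r − 1 ≠ 0` and `r ≠ 1` on `I`, then
`G = (4r² − 2r − 1)²(r + 1)/((4r² + 2r − 1)²(r − 1))` satisfies `G′ = 4√5·G`;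
consequently `G(t) = G(t₀)·e^{4√5(t − t₀)}` for all `t₀, t ∈ I`. -/
theorem stmt17 (I : Set ℝ) (hI : I.OrdConnected) (r : ℝ → ℝ)
    (hr : ∀ t ∈ I, HasDerivAt r
      ((2 / Real.sqrt 5) * (16 * (r t) ^ 4 - 12 * (r t) ^ 2 + 1) * (1 - (r t) ^ 2)) t)
    (h1 : ∀ t ∈ I, 4 * (r t) ^ 2 + 2 * (r t) - 1 ≠ 0)
    (h2 : ∀ t ∈ I, r t ≠ 1)
    (G : ℝ → ℝ)
    (hG : ∀ t, G t = (4 * (r t) ^ 2 - 2 * (r t) - 1) ^ 2 * (r t + 1)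
      / ((4 * (r t) ^ 2 + 2 * (r t) - 1) ^ 2 * (r t - 1))) :
    (∀ t ∈ I, HasDerivAt G (4 * Real.sqrt 5 * G t) t) ∧
    (∀ t₀ ∈ I, ∀ t ∈ I, G t = G t₀ * Real.exp (4 * Real.sqrt 5 * (t - t₀))) := by
  have hderiv : ∀ t ∈ I, HasDerivAt G (4 * √5 * G t) t := by
    intro t ht
    rw [show G = fun t => superflowQuotient (r t) from funext hG]
    exact (hr t ht).superflowQuotient_comp (h1 t ht) (h2 t ht)
  exact ⟨hderiv, fun t₀ ht₀ t ht => hI.convex.eq_mul_exp_of_hasDerivAt_eq_mul hderiv ht₀ ht⟩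
end

section
/- Let n ≥ 1 and let F: ℝⁿ × ℝ → ℝⁿ satisfy the translation (flow) equation F(F(x,s), t) = F(x, s+t) for all x ∈ ℝⁿ and s, t ∈ ℝ. Define φ: ℝⁿ × (ℝ∖{0}) → ℝⁿ⁺¹ by φ(y, w) = (w·F(y/w, w), w). Then φ satisfies the projective translation equation: for all x ∈ ℝⁿ, z ∈ ℝ and s, t ∈ ℝ with zt ≠ 0, zs ≠ 0 and z(t+s) ≠ 0, one has (1/(t+s))·φ(x(t+s), z(t+s)) = (1/s)·φ( φ(xt, zt)·(s/t) ). Moreover F(x,t) = (1/t)·φ(xt, t) for t ≠ 0, so every flow in ℝⁿ is a section on the hyperplane z = 1 of an (n+1)-dimensional projective flow. -/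
/-!
Rescaling `(y, w) ↦ c • (y, w)` multiplies the last coordinate of `φ` by `c` and leaves the
point `w⁻¹ • y` at which `F` is evaluated unchanged, while its time argument becomes `c * w`.
Hence, after dividing by the scalar, both sides of the projective translation equation become
`(z • F (z⁻¹ • x) ((t + s) * z), z)`: the right-hand side through one application of the flow
equation, which merges the times `t * z` and `s * z`.
-/

variable {𝕜 E : Type*} [Field 𝕜] [AddCommGroup E] [Module 𝕜 E]

def projectiveLift (F : E → 𝕜 → E) (p : E × 𝕜) : E × 𝕜 :=
  (p.2 • F (p.2⁻¹ • p.1) p.2, p.2)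

theorem projectiveLift_smul_mk (F : E → 𝕜 → E) {c : 𝕜} (hc : c ≠ 0) (y : E) (w : 𝕜) :
    projectiveLift F (c • (y, w)) = c • (w • F (w⁻¹ • y) (c * w), w) := by
  have hy : (c * w)⁻¹ • c • y = w⁻¹ • y := by
    rw [smul_smul, mul_inv_rev, mul_assoc, inv_mul_cancel₀ hc, mul_one]
  simp only [projectiveLift, Prod.smul_mk, smul_eq_mul, hy, smul_smul]

theorem one_div_smul_projectiveLift_smul (F : E → 𝕜 → E) {c : 𝕜} (hc : c ≠ 0) (y : E) (w : 𝕜) :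
    (1 / c) • projectiveLift F (c • (y, w)) = (w • F (w⁻¹ • y) (c * w), w) := by
  rw [projectiveLift_smul_mk F hc, smul_smul, one_div, inv_mul_cancel₀ hc, one_smul]

theorem projectiveLift_translation {F : E → 𝕜 → E} (hF : ∀ x s t, F (F x s) t = F x (s + t))
    {x : E} {z s t : 𝕜} (hz : z ≠ 0) (hs : s ≠ 0) (ht : t ≠ 0) (hts : t + s ≠ 0) :
    (1 / (t + s)) • projectiveLift F ((t + s) • (x, z)) =
      (1 / s) • projectiveLift F ((s / t) • projectiveLift F (t • (x, z))) := by
  have hscale : (s / t) • projectiveLift F (t • (x, z)) =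
      s • (z • F (z⁻¹ • x) (t * z), z) := by
    rw [projectiveLift_smul_mk F ht, smul_smul, div_mul_cancel₀ s ht]
  rw [hscale, one_div_smul_projectiveLift_smul F hs, smul_smul,
    inv_mul_cancel₀ hz, one_smul, hF, ← add_mul, one_div_smul_projectiveLift_smul F hts]

theorem stmt18_general (n : ℕ) (F : (Fin n → ℝ) → ℝ → (Fin n → ℝ))
    (hF : ∀ (x : Fin n → ℝ) (s t : ℝ), F (F x s) t = F x (s + t))
    (Φ : (Fin n → ℝ) × ℝ → (Fin n → ℝ) × ℝ)
    (hΦ : ∀ (y : Fin n → ℝ) (w : ℝ), Φ (y, w) = (w • F (w⁻¹ • y) w, w)) :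
    (∀ (x : Fin n → ℝ) (z s t : ℝ), z * t ≠ 0 → z * s ≠ 0 → z * (t + s) ≠ 0 →
      (1 / (t + s)) • Φ ((t + s) • (x, z)) = (1 / s) • Φ ((s / t) • Φ (t • (x, z)))) ∧
    (∀ (x : Fin n → ℝ) (t : ℝ), t ≠ 0 →
      (1 / t) • Φ (t • (x, (1 : ℝ))) = (F x t, (1 : ℝ))) := by
  obtain rfl : Φ = projectiveLift F := funext fun ⟨y, w⟩ => hΦ y w
  refine ⟨fun x z s t hzt hzs hzts => ?_, fun x t ht => ?_⟩
  · exact projectiveLift_translation hF (left_ne_zero_of_mul hzt) (right_ne_zero_of_mul hzs)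
      (right_ne_zero_of_mul hzt) (right_ne_zero_of_mul hzts)
  · simpa using one_div_smul_projectiveLift_smul F ht x 1

/-- Every flow `F` in `ℝⁿ` is a section on the hyperplane `z = 1` of the
`(n+1)`-dimensional projective flow `φ(y, w) = (w·F(y/w, w), w)`: the map `φ` satisfies
the projective translation equation
`(1/(t+s))·φ(𝐱(t+s)) = (1/s)·φ(φ(𝐱t)·(s/t))` wherever the last coordinates are nonzero,
and `F(x,t) = (1/t)·φ(xt, t)` for `t ≠ 0`. -/
theorem stmt18 (n : ℕ) (hn : 1 ≤ n) (F : (Fin n → ℝ) → ℝ → (Fin n → ℝ))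
    (hF : ∀ (x : Fin n → ℝ) (s t : ℝ), F (F x s) t = F x (s + t))
    (Φ : (Fin n → ℝ) × ℝ → (Fin n → ℝ) × ℝ)
    (hΦ : ∀ (y : Fin n → ℝ) (w : ℝ), Φ (y, w) = (w • F (w⁻¹ • y) w, w)) :
    (∀ (x : Fin n → ℝ) (z s t : ℝ), z * t ≠ 0 → z * s ≠ 0 → z * (t + s) ≠ 0 →
      (1 / (t + s)) • Φ ((t + s) • (x, z)) = (1 / s) • Φ ((s / t) • Φ (t • (x, z)))) ∧
    (∀ (x : Fin n → ℝ) (t : ℝ), t ≠ 0 →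
      (1 / t) • Φ (t • (x, (1 : ℝ))) = (F x t, (1 : ℝ))) :=
  stmt18_general n F hF Φ hΦ
end
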